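/- Let X be a sober topological space with countable open set lattice O(X). If O(X) is an algebraic lattice, then the dual of the specialization order on X, (X, ≥), is a quasialgebraic poset. -/

import Mathlib

open Set

section RelDefs
variable {α : Type*} (r : α → α → Prop)

/-- `D` is a (nonempty) directed subset with respect to the relation `r`. -/
def DirOn (D : Set α) : Prop :=
  D.Nonempty ∧ ∀ a ∈ D, ∀ b ∈ D, ∃ c ∈ D, r a c ∧ r b c

/-- `s` is a least upper bound of `D` with respect to `r`. -/
def IsLubR (D : Set α) (s : α) : Prop :=
  (∀ d ∈ D, r d s) ∧ ∀ u, (∀ d ∈ D, r d u) → r s u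

/-- `x` is way-below `y` with respect to `r`. -/
def WB (x y : α) : Prop :=
  ∀ D : Set α, DirOn r D → ∀ s, IsLubR r D s → r y s → ∃ d ∈ D, r x d

/-- Every directed subset has a least upper bound (dcpo property). -/
def DcpoRel : Prop := ∀ D : Set α, DirOn r D → ∃ s, IsLubR r D s

/-- Continuity: every element is the directed least upper bound of the elements way-below it. -/
def ContinuousRel : Prop :=
  ∀ y, DirOn r {x | WB r x y} ∧ IsLubR r {x | WB r x y} y

/-- Algebraicity: every element is the directed least upper bound of
the compact elements (`WB r x x`) below it. -/
def AlgebraicRel : Prop :=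
  ∀ y, DirOn r {x | WB r x x ∧ r x y} ∧ IsLubR r {x | WB r x x ∧ r x y} y

/-- Upper set generated by `F` with respect to `r`. -/
def UpS (F : Set α) : Set α := {x | ∃ f ∈ F, r f x}

/-- The set `F` is way-below the set `G` with respect to `r`. -/
def SetWB (F G : Set α) : Prop :=
  ∀ D : Set α, DirOn r D → ∀ s, IsLubR r D s → s ∈ UpS r G → ∃ d ∈ D, d ∈ UpS r F

/-- Finite sets way-below `x`. -/
def FinFam (x : α) : Set (Finset α) := {F | SetWB r (F : Set α) {x}}

/-- Finite sets `F` with `F ≪ F ≪ x`. -/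
def FinFamC (x : α) : Set (Finset α) :=
  {F | SetWB r (F : Set α) (F : Set α) ∧ SetWB r (F : Set α) {x}}

/-- Directedness of a family of finite sets in the Smyth preorder
(`F ⊑ G` iff `G ⊆ ↑F`). -/
def SmythDirected (S : Set (Finset α)) : Prop :=
  S.Nonempty ∧ ∀ F ∈ S, ∀ G ∈ S, ∃ H ∈ S,
    (H : Set α) ⊆ UpS r (F : Set α) ∧ (H : Set α) ⊆ UpS r (G : Set α)

/-- Quasicontinuity with respect to `r`. -/
def QuasicontinuousRel : Prop :=
  ∀ x, SmythDirected r (FinFam r x) ∧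
    UpS r {x} = ⋂ F ∈ FinFam r x, UpS r (F : Set α)

/-- Quasialgebraicity with respect to `r`. -/
def QuasialgebraicRel : Prop :=
  ∀ x, SmythDirected r (FinFamC r x) ∧
    UpS r {x} = ⋂ F ∈ FinFamC r x, UpS r (F : Set α)

/-- `U` is Scott open with respect to `r`: an upper set inaccessible by
least upper bounds of directed sets. -/
def IsScottOpenRel (U : Set α) : Prop :=
  (∀ x ∈ U, ∀ y, r x y → y ∈ U) ∧
    ∀ D : Set α, DirOn r D → ∀ s, IsLubR r D s → s ∈ U → ∃ d ∈ D, d ∈ U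

end RelDefs

section Spec
variable {X : Type*} [TopologicalSpace X]

/-- The specialization order: `x ≤ y` iff `x ∈ cl {y}`. -/
def sle (x y : X) : Prop := x ∈ closure ({y} : Set X)

/-- The maximal elements of `C` with respect to the specialization order. -/
def maxSpec (C : Set X) : Set X := {c | c ∈ C ∧ ∀ y ∈ C, sle c y → sle y c}

end Spec

/-!
With `r x y := y ≤ x`, the sets `↑F` for finite `F` are the finite unions of point closures,
and `F ≪ F` says that `↑F` is inaccessible by filtered infima. In a sober space whose lattice of
opens is countable, every closed set `A` has only finitely many maximal points, and every point of
`A` lies below one of them (Zorn, with generic points bounding chains). Finiteness holds because an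
infinite antichain of maximal points with no irreducible infinite subset can be thinned out to a
sequence of points separated by open sets, and unions of those opens give `2^ℵ₀` open sets.
Hence every closed set is `↑F` for a finite `F`. The complement of a compact open set is
inaccessible by filtered infima, so such complements give members of `fin_c(x)`, and by
algebraicity they separate `x` from every point outside its closure.
-/

section Quasialgebraic

variable {α : Type*} {r : α → α → Prop}

lemma DirOn.image {β : Type*} {s : β → β → Prop} {D : Set α} (hD : DirOn r D)
    {f : α → β} (hf : ∀ a b, r a b → s (f a) (f b)) : DirOn s (f '' D) := by
  refine ⟨hD.1.image f, ?_⟩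
  rintro _ ⟨a, ha, rfl⟩ _ ⟨b, hb, rfl⟩
  obtain ⟨c, hc, hac, hbc⟩ := hD.2 a ha b hb
  exact ⟨f c, mem_image_of_mem f hc, hf a c hac, hf b c hbc⟩

lemma subset_upS [Std.Refl r] (F : Set α) : F ⊆ UpS r F :=
  fun x hx => ⟨x, hx, refl_of r x⟩

lemma upS_singleton_subset [IsTrans α r] {F : Set α} {x : α} (hx : x ∈ UpS r F) :
    UpS r {x} ⊆ UpS r F := by
  rintro z ⟨_, rfl, hxz⟩
  obtain ⟨f, hf, hfx⟩ := hx
  exact ⟨f, hf, _root_.trans hfx hxz⟩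

lemma isScottOpenRel_univ : IsScottOpenRel r univ :=
  ⟨fun _ _ _ _ => trivial, fun _ hD _ _ _ => hD.1.imp fun _ hd => ⟨hd, trivial⟩⟩

lemma IsScottOpenRel.inter {U V : Set α} (hU : IsScottOpenRel r U) (hV : IsScottOpenRel r V) :
    IsScottOpenRel r (U ∩ V) := by
  refine ⟨fun x hx y hxy => ⟨hU.1 x hx.1 y hxy, hV.1 x hx.2 y hxy⟩, fun D hD s hs hsUV => ?_⟩
  obtain ⟨a, ha, haU⟩ := hU.2 D hD s hs hsUV.1
  obtain ⟨b, hb, hbV⟩ := hV.2 D hD s hs hsUV.2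
  obtain ⟨c, hc, hac, hbc⟩ := hD.2 a ha b hb
  exact ⟨c, hc, hU.1 a haU c hac, hV.1 b hbV c hbc⟩

lemma isScottOpenRel_upS_iff [IsTrans α r] {F : Set α} :
    IsScottOpenRel r (UpS r F) ↔ SetWB r F F :=
  ⟨And.right, fun h => ⟨fun _ ⟨f, hf, hfx⟩ _ hxy => ⟨f, hf, _root_.trans hfx hxy⟩, h⟩⟩

lemma setWB_of_isScottOpenRel_upS {F G : Set α} (hF : IsScottOpenRel r (UpS r F))
    (hGF : UpS r G ⊆ UpS r F) : SetWB r F G :=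
  fun D hD s hs hsG => hF.2 D hD s hs (hGF hsG)

lemma mem_upS_of_setWB_singleton [Std.Refl r] {F : Set α} {x : α} (h : SetWB r F {x}) :
    x ∈ UpS r F := by
  have hdir : DirOn r {x} :=
    ⟨⟨x, rfl⟩, fun a ha b hb => ⟨x, rfl, ha ▸ refl_of r x, hb ▸ refl_of r x⟩⟩
  have hlub : IsLubR r {x} x := ⟨fun d hd => hd ▸ refl_of r x, fun u hu => hu x rfl⟩
  obtain ⟨d, rfl, hd⟩ := h {x} hdir x hlub (subset_upS _ rfl)
  exact hd

lemma mem_finFamC_iff [IsPreorder α r] {F : Finset α} {x : α} :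
    F ∈ FinFamC r x ↔ IsScottOpenRel r (UpS r ↑F) ∧ x ∈ UpS r ↑F := by
  change SetWB r ↑F ↑F ∧ SetWB r ↑F {x} ↔ _
  rw [← isScottOpenRel_upS_iff]
  exact and_congr_right fun hF =>
    ⟨mem_upS_of_setWB_singleton, fun hx => setWB_of_isScottOpenRel_upS hF (upS_singleton_subset hx)⟩

theorem quasialgebraicRel_of_isScottOpenRel_upS [IsPreorder α r]
    (huniv : ∃ F : Finset α, UpS r ↑F = univ)
    (hinter : ∀ F G : Finset α, IsScottOpenRel r (UpS r ↑F) → IsScottOpenRel r (UpS r ↑G) →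
      ∃ H : Finset α, UpS r ↑H = UpS r ↑F ∩ UpS r ↑G)
    (hsep : ∀ x y, y ∉ UpS r {x} →
      ∃ F : Finset α, IsScottOpenRel r (UpS r ↑F) ∧ x ∈ UpS r ↑F ∧ y ∉ UpS r ↑F) :
    QuasialgebraicRel r := by
  intro x
  refine ⟨⟨?_, fun F hF G hG => ?_⟩, ?_⟩
  · obtain ⟨F, hF⟩ := huniv
    exact ⟨F, mem_finFamC_iff.2 ⟨hF ▸ isScottOpenRel_univ, hF ▸ mem_univ x⟩⟩
  · rw [mem_finFamC_iff] at hF hG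
    obtain ⟨H, hH⟩ := hinter F G hF.1 hG.1
    refine ⟨H, mem_finFamC_iff.2 ⟨hH ▸ hF.1.inter hG.1, hH ▸ ⟨hF.2, hG.2⟩⟩, ?_, ?_⟩
    · exact (subset_upS _).trans (hH ▸ inter_subset_left)
    · exact (subset_upS _).trans (hH ▸ inter_subset_right)
  · refine (subset_iInter₂ fun F hF => upS_singleton_subset (mem_finFamC_iff.1 hF).2).antisymm
      fun y hy => ?_
    by_contra hyx
    obtain ⟨F, hF, hxF, hyF⟩ := hsep x y hyx
    exact hyF (mem_iInter₂.1 hy F (mem_finFamC_iff.2 ⟨hF, hxF⟩))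

end Quasialgebraic

section Specialization

variable {X : Type*} [TopologicalSpace X]

lemma sle_iff_specializes {x y : X} : sle x y ↔ y ⤳ x :=
  specializes_iff_mem_closure.symm

instance : IsPreorder X (fun x y : X => sle y x) where
  refl _ := sle_iff_specializes.2 specializes_rfl
  trans _ _ _ hxy hyz :=
    sle_iff_specializes.2 ((sle_iff_specializes.1 hxy).trans (sle_iff_specializes.1 hyz))

lemma sle_antisymm [T0Space X] {x y : X} (hxy : sle x y) (hyx : sle y x) : x = y :=
  ((sle_iff_specializes.1 hyx).antisymm (sle_iff_specializes.1 hxy)).eq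

lemma IsOpen.mem_of_sle {U : Set X} (hU : IsOpen U) {x y : X} (hxy : sle x y) (hx : x ∈ U) :
    y ∈ U :=
  (sle_iff_specializes.1 hxy).mem_open hU hx

lemma IsClosed.mem_of_sle {A : Set X} (hA : IsClosed A) {x y : X} (hxy : sle x y) (hy : y ∈ A) :
    x ∈ A :=
  (sle_iff_specializes.1 hxy).mem_closed hA hy

lemma upS_sle_eq (S : Set X) : UpS (fun x y : X => sle y x) S = ⋃ s ∈ S, closure {s} := by
  ext z
  simp only [UpS, sle, mem_iUnion, exists_prop]
  rfl

lemma upS_sle_singleton (x : X) : UpS (fun x y : X => sle y x) {x} = closure {x} := by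
  rw [upS_sle_eq, biUnion_singleton]

lemma isClosed_upS_sle {S : Set X} (hS : S.Finite) : IsClosed (UpS (fun x y : X => sle y x) S) := by
  rw [upS_sle_eq]
  exact hS.isClosed_biUnion fun _ _ => isClosed_closure

lemma IsChain.isPreirreducible {c : Set X} (hc : IsChain sle c) : IsPreirreducible c := by
  rintro u v hu hv ⟨a, hac, hau⟩ ⟨b, hbc, hbv⟩
  rcases eq_or_ne a b with rfl | hab
  · exact ⟨a, hac, hau, hbv⟩
  rcases hc hac hbc hab with h | h
  · exact ⟨b, hbc, hu.mem_of_sle h hau, hbv⟩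
  · exact ⟨a, hac, hau, hv.mem_of_sle h hbv⟩

lemma IsIrreducible.exists_forall_sle [QuasiSober X] {T : Set X} (hT : IsIrreducible T) :
    ∃ g ∈ closure T, ∀ t ∈ T, sle t g := by
  have hg := hT.isGenericPoint_genericPoint_closure
  refine ⟨hT.genericPoint, hg.mem, fun t ht => ?_⟩
  rw [sle, hg.def]
  exact subset_closure ht

lemma exists_sle_mem_maxSpec [QuasiSober X] {A : Set X} (hA : IsClosed A) {x : X} (hx : x ∈ A) :
    ∃ m ∈ maxSpec A, sle x m := by
  let : Preorder X :=
    { le := sle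
      le_refl := refl_of (fun x y : X => sle y x)
      le_trans := fun _ _ _ hxy hyz => _root_.trans (r := fun x y : X => sle y x) hyz hxy }
  have hchain : ∀ c ⊆ A, IsChain (· ≤ ·) c → ∀ y ∈ c, ∃ ub ∈ A, ∀ z ∈ c, z ≤ ub := by
    intro c hcA hc y hy
    obtain ⟨g, hg, hcg⟩ := IsIrreducible.exists_forall_sle ⟨⟨y, hy⟩, hc.isPreirreducible⟩
    exact ⟨g, closure_minimal hcA hA hg, hcg⟩
  obtain ⟨m, hxm, hm⟩ := zorn_le_nonempty₀ A hchain x hx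
  exact ⟨m, ⟨hm.1, fun y hy hmy => hm.2 hy hmy⟩, hxm⟩

lemma eq_of_mem_maxSpec_of_sle [T0Space X] {A : Set X} {a b : X} (ha : a ∈ maxSpec A)
    (hb : b ∈ maxSpec A) (hab : sle a b) : a = b :=
  sle_antisymm hab (ha.2 b hb.1 hab)

lemma IsPreirreducible.subsingleton_of_subset_maxSpec [T0Space X] [QuasiSober X] {A T : Set X}
    (hA : IsClosed A) (hTA : T ⊆ maxSpec A) (hT : IsPreirreducible T) : T.Subsingleton := by
  rcases T.eq_empty_or_nonempty with rfl | hne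
  · exact subsingleton_empty
  obtain ⟨g, hg, hTg⟩ := IsIrreducible.exists_forall_sle ⟨hne, hT⟩
  have hgA : g ∈ A := closure_minimal (fun t ht => (hTA ht).1) hA hg
  have heq : ∀ t ∈ T, t = g := fun t ht => sle_antisymm (hTg t ht) ((hTA ht).2 g hgA (hTg t ht))
  exact fun a ha b hb => (heq a ha).trans (heq b hb).symm

end Specialization

section CountableOpens

open Function

variable {X : Type*} [TopologicalSpace X]

lemma Set.Infinite.exists_isOpen_disjoint_infinite {T : Set X} (hT : T.Infinite)
    (hpre : ¬ IsPreirreducible T) :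
    ∃ d ∈ T, ∃ W, IsOpen W ∧ d ∈ W ∧ ∃ T' ⊆ T, T'.Infinite ∧ Disjoint W T' := by
  simp only [IsPreirreducible, not_forall] at hpre
  obtain ⟨u, v, hu, hv, ⟨a, haT, hau⟩, ⟨b, hbT, hbv⟩, huv⟩ := hpre
  have hcover : T ⊆ T \ u ∪ T \ v := fun t ht =>
    (em (t ∈ u)).elim (fun htu => Or.inr ⟨ht, fun htv => huv ⟨t, ht, htu, htv⟩⟩)
      (fun htu => Or.inl ⟨ht, htu⟩)
  rcases infinite_union.1 (hT.mono hcover) with h | h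
  · exact ⟨a, haT, u, hu, hau, T \ u, sdiff_subset, h, disjoint_sdiff_right⟩
  · exact ⟨b, hbT, v, hv, hbv, T \ v, sdiff_subset, h, disjoint_sdiff_right⟩

lemma Set.Infinite.exists_rightSeparated_seq {S : Set X} (hS : S.Infinite)
    (hred : ∀ T ⊆ S, T.Infinite → ¬ IsPreirreducible T) :
    ∃ (d : ℕ → X) (W : ℕ → Set X), (∀ n, d n ∈ S ∧ IsOpen (W n) ∧ d n ∈ W n) ∧
      ∀ m n, m < n → d n ∉ W m := by
  have step : ∀ T : {T : Set X // T ⊆ S ∧ T.Infinite}, ∃ d ∈ T.1, ∃ W, IsOpen W ∧ d ∈ W ∧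
      ∃ T' : {T : Set X // T ⊆ S ∧ T.Infinite}, T'.1 ⊆ T.1 ∧ Disjoint W T'.1 := by
    rintro ⟨T, hTS, hT⟩
    obtain ⟨d, hd, W, hW, hdW, T', hT'T, hT', hWT'⟩ :=
      hT.exists_isOpen_disjoint_infinite (hred T hTS hT)
    exact ⟨d, hd, W, hW, hdW, ⟨T', hT'T.trans hTS, hT'⟩, hT'T, hWT'⟩
  choose d hd W hW hdW next hnext hdisj using step
  let seq n := next^[n] ⟨S, subset_rfl, hS⟩
  have hseq_succ : ∀ n, seq (n + 1) = next (seq n) := fun n => iterate_succ_apply' next n _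
  have hanti : Antitone fun n => (seq n).1 :=
    antitone_nat_of_succ_le fun n => hseq_succ n ▸ hnext (seq n)
  refine ⟨fun n => d (seq n), fun n => W (seq n),
    fun n => ⟨(seq n).2.1 (hd _), hW _, hdW _⟩, fun m n hmn hn => ?_⟩
  have hmem : d (seq n) ∈ (next (seq m)).1 := hseq_succ m ▸ hanti hmn (hd _)
  exact (hdisj (seq m)).notMem_of_mem_left hn hmem

lemma not_countable_isOpen_of_isolated_seq {d : ℕ → X} {V : ℕ → Set X} (hV : ∀ n, IsOpen (V n))
    (hdV : ∀ k n, d k ∈ V n ↔ k = n) : ¬ {U : Set X | IsOpen U}.Countable := by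
  intro hcnt
  let Φ : Set ℕ → Set X := fun s => ⋃ n ∈ s, V n
  have hmem : ∀ s k, d k ∈ Φ s ↔ k ∈ s := by simp [Φ, hdV]
  have hΦ : Injective Φ := fun s t hst => ext fun k => by rw [← hmem s k, ← hmem t k, hst]
  have : Countable (Set ℕ) := by
    refine countable_univ_iff.1 (countable_of_injective_of_countable_image hΦ.injOn ?_)
    exact hcnt.mono (image_subset_iff.2 fun s _ => isOpen_biUnion fun n _ => hV n)
  obtain ⟨f, hf⟩ := exists_injective_nat (Set ℕ)
  exact cantor_injective f hf

theorem maxSpec_finite [T0Space X] [QuasiSober X] (hcnt : {U : Set X | IsOpen U}.Countable)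
    {A : Set X} (hA : IsClosed A) : (maxSpec A).Finite := by
  by_contra hinf
  obtain ⟨d, W, hd, hdW⟩ := Set.Infinite.exists_rightSeparated_seq hinf fun T hTA hT hpre =>
    hT (hpre.subsingleton_of_subset_maxSpec hA hTA).finite
  have hsle : ∀ m n, sle (d n) (d m) → m = n := by
    intro m n h
    rcases lt_trichotomy m n with hmn | rfl | hnm
    · exact absurd ((eq_of_mem_maxSpec_of_sle (hd n).1 (hd m).1 h) ▸ (hd m).2.2) (hdW m n hmn)
    · rfl
    · exact absurd ((eq_of_mem_maxSpec_of_sle (hd n).1 (hd m).1 h).symm ▸ (hd n).2.2)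
        (hdW n m hnm)
  -- removing the closures of the earlier points keeps `d n`, since the `d m` form an antichain
  refine not_countable_isOpen_of_isolated_seq (d := d) (V := fun n => W n \ ⋃ m < n, closure {d m})
    (fun n => (hd n).2.1.sdiff ((finite_lt_nat n).isClosed_biUnion fun _ _ => isClosed_closure))
    (fun k n => ?_) hcnt
  simp only [mem_sdiff, mem_iUnion, exists_prop, not_exists, not_and]
  refine ⟨fun ⟨hkW, hk⟩ => ?_, fun hkn => hkn ▸ ⟨(hd k).2.2, fun m hmk h => hmk.ne (hsle m k h)⟩⟩
  rcases lt_trichotomy k n with hkn | rfl | hnk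
  · exact absurd (subset_closure (mem_singleton _)) (hk k hkn)
  · rfl
  · exact absurd hkW (hdW n k hnk)

end CountableOpens

section Opens

variable {X : Type*} [TopologicalSpace X]

lemma exists_finset_upS_sle_eq [T0Space X] [QuasiSober X]
    (hcnt : {U : Set X | IsOpen U}.Countable) {A : Set X} (hA : IsClosed A) :
    ∃ F : Finset X, UpS (fun x y : X => sle y x) ↑F = A := by
  refine ⟨(maxSpec_finite hcnt hA).toFinset, Subset.antisymm ?_ fun x hx => ?_⟩
  · rintro z ⟨m, hm, hzm⟩
    exact hA.mem_of_sle hzm ((maxSpec_finite hcnt hA).mem_toFinset.1 hm).1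
  · obtain ⟨m, hm, hxm⟩ := exists_sle_mem_maxSpec hA hx
    exact ⟨m, (maxSpec_finite hcnt hA).mem_toFinset.2 hm, hxm⟩

lemma isLubR_biUnion (S : Set {U : Set X // IsOpen U}) :
    IsLubR (fun U V : {U : Set X // IsOpen U} => U.1 ⊆ V.1) S
      ⟨⋃ U ∈ S, U.1, isOpen_biUnion fun U _ => U.2⟩ :=
  ⟨fun _ hU => subset_biUnion_of_mem (u := Subtype.val) hU, fun _ hV => iUnion₂_subset hV⟩

/-- If the infimum of a filtered `D` lies outside `K`, then `K` is covered by the directed family of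
complements of closures of members of `D`, so by compactness `K` misses the closure of one of them. -/
lemma isScottOpenRel_compl_of_wb {K : {U : Set X // IsOpen U}}
    (hK : WB (fun U V : {U : Set X // IsOpen U} => U.1 ⊆ V.1) K K) :
    IsScottOpenRel (fun x y : X => sle y x) K.1ᶜ := by
  refine ⟨fun x hx y hyx hy => hx (K.2.mem_of_sle hyx hy), fun D hD s hs hsK => ?_⟩
  let cocl : X → {U : Set X // IsOpen U} := fun a => ⟨(closure {a})ᶜ, isClosed_closure.isOpen_compl⟩
  have hdir : DirOn (fun U V : {U : Set X // IsOpen U} => U.1 ⊆ V.1) (cocl '' D) :=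
    hD.image fun a b hba => compl_subset_compl.2 <|
      closure_minimal (singleton_subset_iff.2 hba) isClosed_closure
  have hcover : K.1 ⊆ ⋃ U ∈ cocl '' D, U.1 := by
    intro k hk
    by_contra hnk
    simp only [mem_iUnion, mem_image, exists_prop] at hnk
    have hks : sle k s := hs.2 k fun a ha => not_not.1 fun h => hnk ⟨cocl a, ⟨a, ha, rfl⟩, h⟩
    exact hsK (K.2.mem_of_sle hks hk)
  obtain ⟨_, ⟨a, ha, rfl⟩, hKa⟩ := hK _ hdir _ (isLubR_biUnion _) hcover
  by_cases haK : a ∈ K.1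
  · exact absurd (subset_closure (mem_singleton a)) (hKa haK)
  · exact ⟨a, ha, haK⟩

lemma exists_wb_mem_subset (halg : AlgebraicRel (fun U V : {U : Set X // IsOpen U} => U.1 ⊆ V.1))
    {o : Set X} (ho : IsOpen o) {z : X} (hz : z ∈ o) :
    ∃ K : {U : Set X // IsOpen U},
      WB (fun U V : {U : Set X // IsOpen U} => U.1 ⊆ V.1) K K ∧ K.1 ⊆ o ∧ z ∈ K.1 := by
  have hsub := (halg ⟨o, ho⟩).2.2 _ (isLubR_biUnion _).1
  obtain ⟨K, ⟨hK, hKo⟩, hzK⟩ := mem_iUnion₂.1 (hsub hz)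
  exact ⟨K, hK, hKo, hzK⟩

end Opens

/-- If `X` is sober with countable, algebraic open set lattice,
then `X` with the dual of the specialization order is a quasialgebraic poset. -/
theorem stmt8 {X : Type*} [TopologicalSpace X] [T0Space X] [QuasiSober X]
    (hcnt : {U : Set X | IsOpen U}.Countable)
    (halg : AlgebraicRel (fun U V : {U : Set X // IsOpen U} => U.1 ⊆ V.1)) :
    QuasialgebraicRel (fun x y : X => sle y x) := by
  refine quasialgebraicRel_of_isScottOpenRel_upS (exists_finset_upS_sle_eq hcnt isClosed_univ)
    (fun F G _ _ => exists_finset_upS_sle_eq hcnt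
      ((isClosed_upS_sle F.finite_toSet).inter (isClosed_upS_sle G.finite_toSet)))
    fun x y hyx => ?_
  rw [upS_sle_singleton] at hyx
  obtain ⟨K, hK, hKo, hyK⟩ := exists_wb_mem_subset halg isClosed_closure.isOpen_compl hyx
  obtain ⟨F, hF⟩ := exists_finset_upS_sle_eq hcnt K.2.isClosed_compl
  refine ⟨F, hF ▸ isScottOpenRel_compl_of_wb hK, hF ▸ fun hxK => ?_, hF ▸ not_not.2 hyK⟩
  exact hKo hxK (subset_closure (mem_singleton x))
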